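/- Let G be a τ-critical graph with τ(G) = t and |V(G)| = n. Then the degree d(v) ≤ 2t + 1 − n for every vertex v ∈ V(G). -/

import Mathlib

open SimpleGraph

variable {V : Type*}

/-- A transversal set (vertex cover): a set of vertices incident to all edges. -/
def IsTransversal (G : SimpleGraph V) (T : Finset V) : Prop :=
  ∀ ⦃u v : V⦄, G.Adj u v → u ∈ T ∨ v ∈ T

/-- The transversal number `τ(G)`: minimum cardinality of a transversal set. -/
noncomputable def tauNum (G : SimpleGraph V) [Fintype V] : ℕ :=
  sInf {k | ∃ T : Finset V, T.card = k ∧ IsTransversal G T}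

/-- `G` is τ-critical: it has no isolated vertex and deleting any edge decreases `τ`. -/
def IsTauCritical (G : SimpleGraph V) [Fintype V] : Prop :=
  (∀ v : V, ∃ u, G.Adj v u) ∧
    ∀ e ∈ G.edgeSet, tauNum (G.deleteEdges {e}) < tauNum G

/-- `mK2 m` is the disjoint union of `m` copies of `K₂`. -/
def mK2 (m : ℕ) : SimpleGraph (Fin m × Fin 2) where
  Adj x y := x.1 = y.1 ∧ x.2 ≠ y.2
  symm := ⟨fun _ _ ⟨h1, h2⟩ => ⟨h1.symm, h2.symm⟩⟩
  loopless := ⟨fun _ ⟨_, h⟩ => h rfl⟩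

/-- The spectral radius `λ₁(G)`: the largest eigenvalue of the adjacency matrix of `G`. -/
noncomputable def specRad (G : SimpleGraph V) [Fintype V] [DecidableEq V]
    [DecidableRel G.Adj] : ℝ :=
  sSup (spectrum ℝ (G.adjMatrix ℝ))

/-- The signless Laplacian spectral radius `q₁(G)`: the largest eigenvalue of
`Q(G) = D(G) + A(G)`. -/
noncomputable def signlessLapSpecRad (G : SimpleGraph V) [Fintype V] [DecidableEq V]
    [DecidableRel G.Adj] : ℝ :=
  sSup (spectrum ℝ (Matrix.diagonal (fun v => (G.degree v : ℝ)) + G.adjMatrix ℝ))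

/-!
Fix an edge `vu`. Criticality gives a cover `T` of `G - vu` with `|T| = t - 1` and `u, v ∉ T`;
then `S = V \ (T ∪ {u, v})` is independent, misses `N(v)` and has all its neighbours in `T`,
while `T` contains `N(v) \ {u}`. So `n - t - 1 = |S|` and `|N(S) \ N(v)| ≤ |T \ N(v)| ≤ t - d(v)`,
and the theorem follows from Hajnal's lemma relative to `v`: every independent `A` disjoint from
`N[v]` has `|A| ≤ |N(A) \ N(v)|`.

For a minimal counterexample `A` and `a ∈ A`, Hall's theorem matches `A - a` onto
`N(A) \ N(v)`. Delete an edge `e` — `vy` with `y ∈ N(A) ∩ N(v)` if there is one, otherwise an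
edge at `a` — and let `T'` be a cover of `G - e` of size `τ(G) - 1`. Every matching edge missing
`T'` at its `A`-end is covered at its other end, so `|N(A) \ T'| ≤ |A ∩ T'|`, and the cover
`(T' \ A) ∪ N(A)` of `G` has fewer than `τ(G)` vertices.
-/

open Finset

theorem Finset.exists_injOn_of_card_le_card_biUnion {ι α : Type*} [DecidableEq α] [Nonempty α]
    {t : ι → Finset α} {s : Finset ι} (hs : ∀ s' ⊆ s, #s' ≤ #(s'.biUnion t)) :
    ∃ f : ι → α, Set.InjOn f s ∧ ∀ x ∈ s, f x ∈ t x := by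
  classical
  obtain ⟨g, hg, hgt⟩ := (all_card_le_biUnion_card_iff_existsInjective' fun x : s => t x).1
    fun s' => by
      simpa [card_image_of_injective _ Subtype.val_injective, image_biUnion] using
        hs (s'.image (↑)) fun x hx => by
          obtain ⟨y, -, rfl⟩ := mem_image.1 hx
          exact y.2
  refine ⟨fun x => if hx : x ∈ s then g ⟨x, hx⟩ else Classical.arbitrary α, ?_, ?_⟩
  · intro x hx y hy hxy
    exact congrArg Subtype.val (hg (by simpa [mem_coe.1 hx, mem_coe.1 hy] using hxy))
  · intro x hx
    simpa [hx] using hgt ⟨x, hx⟩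

theorem Finset.exists_image_erase_eq_biUnion_of_card_biUnion_lt {ι α : Type*} [DecidableEq ι]
    [DecidableEq α] [Nonempty α] {t : ι → Finset α} {A : Finset ι} {a : ι} (ha : a ∈ A)
    (hHall : ∀ B ⊂ A, #B ≤ #(B.biUnion t)) (hA : #(A.biUnion t) < #A) :
    ∃ f : ι → α, (∀ x ∈ A.erase a, f x ∈ t x) ∧ (A.erase a).image f = A.biUnion t := by
  obtain ⟨f, hinj, hft⟩ := exists_injOn_of_card_le_card_biUnion (t := t) (s := A.erase a)
    fun B hB => hHall B (hB.trans_ssubset (erase_ssubset ha))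
  refine ⟨f, hft, eq_of_subset_of_card_le ?_ ?_⟩
  · simp only [image_subset_iff, mem_biUnion]
    exact fun x hx => ⟨x, mem_of_mem_erase hx, hft x hx⟩
  · rw [card_image_of_injOn hinj, card_erase_of_mem ha]
    omega

theorem Finset.card_sdiff_le_card_inter_of_subset_image {α : Type*} [DecidableEq α]
    {f : α → α} {P S T : Finset α} (hS : S ⊆ P.image f) (hf : ∀ x ∈ P, x ∉ T → f x ∈ T) :
    #(S \ T) ≤ #(P ∩ T) := by
  refine (card_le_card (t := (P ∩ T).image f) fun z hz => ?_).trans card_image_le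
  obtain ⟨hzS, hzT⟩ := mem_sdiff.1 hz
  obtain ⟨x, hxP, rfl⟩ := mem_image.1 (hS hzS)
  exact mem_image.2 ⟨x, mem_inter.2 ⟨hxP, by_contra fun hxT => hzT (hf x hxP hxT)⟩, rfl⟩

section Transversal

variable [Fintype V] {G : SimpleGraph V}

theorem exists_isTransversal_card_eq_tauNum (G : SimpleGraph V) :
    ∃ T : Finset V, #T = tauNum G ∧ IsTransversal G T :=
  Nat.sInf_mem (s := {k | ∃ T : Finset V, #T = k ∧ IsTransversal G T})
    ⟨_, univ, rfl, fun u _ _ => Or.inl (mem_univ u)⟩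

theorem IsTransversal.tauNum_le {T : Finset V} (hT : IsTransversal G T) : tauNum G ≤ #T :=
  Nat.sInf_le ⟨T, rfl, hT⟩

omit [Fintype V] in
theorem IsTransversal.mem_of_adj {p q x y : V} {T : Finset V}
    (hT : IsTransversal (G.deleteEdges {s(p, q)}) T) (hxy : G.Adj x y) (hxT : x ∉ T)
    (hxp : x ≠ p) (hxq : x ≠ q) : y ∈ T :=
  (hT ((deleteEdges_adj ..).2 ⟨hxy, by simp [hxp, hxq]⟩)).resolve_left hxT

omit [Fintype V] in
theorem IsTransversal.of_deleteEdges_of_mem {p q : V} {T : Finset V}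
    (hT : IsTransversal (G.deleteEdges {s(p, q)}) T) (hpT : p ∈ T) : IsTransversal G T := by
  intro x y hxy
  by_cases he : s(x, y) = s(p, q)
  · rcases Sym2.eq_iff.1 he with ⟨rfl, -⟩ | ⟨-, rfl⟩
    exacts [Or.inl hpT, Or.inr hpT]
  · exact hT ((deleteEdges_adj ..).2 ⟨hxy, he⟩)

theorem IsTauCritical.exists_isTransversal_deleteEdges (hG : IsTauCritical G) {p q : V}
    (hpq : G.Adj p q) :
    ∃ T : Finset V, IsTransversal (G.deleteEdges {s(p, q)}) T ∧ #T + 1 = tauNum G ∧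
      p ∉ T ∧ q ∉ T := by
  classical
  obtain ⟨T, hTcard, hT⟩ := exists_isTransversal_card_eq_tauNum (G.deleteEdges {s(p, q)})
  have hlt : #T < tauNum G := hTcard ▸ hG.2 _ hpq
  have hpT : p ∉ T := fun hp => (hT.of_deleteEdges_of_mem hp).tauNum_le.not_gt hlt
  have hqT : q ∉ T := fun hq =>
    ((Sym2.eq_swap ▸ hT : IsTransversal (G.deleteEdges {s(q, p)}) T).of_deleteEdges_of_mem
      hq).tauNum_le.not_gt hlt
  have hle : tauNum G ≤ #(insert p T) :=
    IsTransversal.tauNum_le <| IsTransversal.of_deleteEdges_of_mem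
      (fun x y hxy => (hT hxy).imp (mem_insert_of_mem ·) (mem_insert_of_mem ·))
      (mem_insert_self p T)
  rw [card_insert_of_notMem hpT] at hle
  exact ⟨T, hT, by omega, hpT, hqT⟩

end Transversal

section Hajnal

variable [Fintype V] [DecidableEq V] {G : SimpleGraph V} [DecidableRel G.Adj]

theorem IsTransversal.degree_le_card_inter_neighborFinset_add_one
    {u v : V} {T : Finset V} (hT : IsTransversal (G.deleteEdges {s(v, u)}) T) (hvT : v ∉ T) :
    G.degree v ≤ #(T ∩ G.neighborFinset v) + 1 := by
  have hNv : G.neighborFinset v ⊆ insert u (T ∩ G.neighborFinset v) := by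
    intro w hw
    rw [mem_neighborFinset] at hw
    by_cases hwu : w = u
    · exact mem_insert.2 (Or.inl hwu)
    by_cases hwT : w ∈ T
    · exact mem_insert_of_mem (mem_inter.2 ⟨hwT, (mem_neighborFinset ..).2 hw⟩)
    · exact absurd (hT.mem_of_adj hw.symm hwT hw.ne.symm hwu) hvT
  rw [← card_neighborFinset_eq_degree]
  exact (card_le_card hNv).trans (card_insert_le _ _)

theorem notMem_of_mem_biUnion_neighborFinset {A : Finset V} {z : V}
    (hA : G.IsIndepSet A) (hz : z ∈ A.biUnion (G.neighborFinset ·)) : z ∉ A := fun hzA => by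
  obtain ⟨a, ha, haz⟩ := mem_biUnion.1 hz
  rw [mem_neighborFinset] at haz
  exact hA (mem_coe.2 ha) (mem_coe.2 hzA) haz.ne haz

theorem IsTransversal.tauNum_le_of_card_biUnion_sdiff_le {p q : V} {T A : Finset V}
    (hT : IsTransversal (G.deleteEdges {s(p, q)}) T) (hA : G.IsIndepSet A)
    (hq : q ∈ A.biUnion (G.neighborFinset ·))
    (hcard : #(A.biUnion (G.neighborFinset ·) \ T) ≤ #(A ∩ T)) : tauNum G ≤ #T := by
  set N := A.biUnion (G.neighborFinset ·)
  have hcover : IsTransversal G (T \ A ∪ N) := by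
    intro x y hxy
    by_cases hx : x ∈ A
    · exact Or.inr (mem_union_right _ (mem_biUnion.2 ⟨x, hx, (mem_neighborFinset ..).2 hxy⟩))
    by_cases hy : y ∈ A
    · exact Or.inl (mem_union_right _ (mem_biUnion.2 ⟨y, hy, (mem_neighborFinset ..).2 hxy.symm⟩))
    by_cases he : s(x, y) = s(p, q)
    · rcases Sym2.eq_iff.1 he with ⟨-, rfl⟩ | ⟨rfl, -⟩
      exacts [Or.inr (mem_union_right _ hq), Or.inl (mem_union_right _ hq)]
    · exact (hT ((deleteEdges_adj ..).2 ⟨hxy, he⟩)).imp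
        (fun h => mem_union_left _ (mem_sdiff.2 ⟨h, hx⟩))
        (fun h => mem_union_left _ (mem_sdiff.2 ⟨h, hy⟩))
  have hsub : T \ A ∪ N ⊆ T \ A ∪ N \ T := fun z hz => by
    by_cases hzT : z ∈ T
    · rcases mem_union.1 hz with h | h
      exacts [mem_union_left _ h,
        mem_union_left _ (mem_sdiff.2 ⟨hzT, notMem_of_mem_biUnion_neighborFinset hA h⟩)]
    · rcases mem_union.1 hz with h | h
      exacts [absurd (mem_sdiff.1 h).1 hzT, mem_union_right _ (mem_sdiff.2 ⟨h, hzT⟩)]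
  calc tauNum G ≤ #(T \ A ∪ N) := hcover.tauNum_le
    _ ≤ #(T \ A) + #(N \ T) := (card_le_card hsub).trans (card_union_le _ _)
    _ ≤ #(T \ A) + #(T ∩ A) := by rw [inter_comm]; omega
    _ = #T := card_sdiff_add_card_inter T A

variable {v a : V} {A : Finset V} {f : V → V}

theorem IsTauCritical.not_subset_image_erase_of_adj (hG : IsTauCritical G)
    (hA : G.IsIndepSet A) (hvA : v ∉ A) (hAv : ∀ b ∈ A, ¬G.Adj v b) (ha : a ∈ A) {y : V}
    (hay : G.Adj a y) (hvy : G.Adj v y)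
    (hf : ∀ x ∈ A.erase a, f x ∈ G.neighborFinset x \ G.neighborFinset v) :
    ¬(A.biUnion fun x => G.neighborFinset x \ G.neighborFinset v) ⊆ (A.erase a).image f := by
  intro himage
  obtain ⟨T, hT, hTcard, hvT, hyT⟩ := hG.exists_isTransversal_deleteEdges hvy
  have hyA : y ∉ A := fun h => hAv y h hvy
  have haT : a ∈ T := by
    by_contra haT
    exact hyT (hT.mem_of_adj hay haT (fun h => hvA (h ▸ ha)) hay.ne)
  have hfT : ∀ x ∈ A.erase a, x ∉ T → f x ∈ T := fun x hx hxT =>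
    hT.mem_of_adj ((mem_neighborFinset ..).1 (mem_sdiff.1 (hf x hx)).1) hxT
      (fun h => hvA (h ▸ mem_of_mem_erase hx)) (fun h => hyA (h ▸ mem_of_mem_erase hx))
  have hsub : A.biUnion (G.neighborFinset ·) \ T ⊆
      insert y ((A.biUnion fun x => G.neighborFinset x \ G.neighborFinset v) \ T) := by
    intro z hz
    obtain ⟨hzN, hzT⟩ := mem_sdiff.1 hz
    by_cases hzy : z = y
    · exact mem_insert.2 (Or.inl hzy)
    refine mem_insert_of_mem (mem_sdiff.2 ⟨?_, hzT⟩)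
    obtain ⟨b, hb, hbz⟩ := mem_biUnion.1 hzN
    refine mem_biUnion.2 ⟨b, hb, mem_sdiff.2 ⟨hbz, fun hvz => ?_⟩⟩
    rw [mem_neighborFinset] at hvz
    exact hvT (hT.mem_of_adj hvz.symm hzT hvz.ne.symm hzy)
  have hcard : #(A.biUnion (G.neighborFinset ·) \ T) ≤ #(A ∩ T) := calc
    _ ≤ #((A.biUnion fun x => G.neighborFinset x \ G.neighborFinset v) \ T) + 1 :=
      (card_le_card hsub).trans (card_insert_le _ _)
    _ ≤ #(A.erase a ∩ T) + 1 :=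
      Nat.add_le_add_right (card_sdiff_le_card_inter_of_subset_image himage hfT) 1
    _ = #(A ∩ T) := by
      rw [erase_inter, card_erase_of_mem (mem_inter.2 ⟨ha, haT⟩)]
      have := card_pos.2 ⟨a, mem_inter.2 ⟨ha, haT⟩⟩
      omega
  have := hT.tauNum_le_of_card_biUnion_sdiff_le hA
    (mem_biUnion.2 ⟨a, ha, (mem_neighborFinset ..).2 hay⟩) hcard
  omega

theorem IsTauCritical.not_subset_image_erase_of_forall_not_adj (hG : IsTauCritical G)
    (hA : G.IsIndepSet A) (ha : a ∈ A) (hAv : ∀ b ∈ A, ∀ z, G.Adj b z → ¬G.Adj v z)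
    (hf : ∀ x ∈ A.erase a, f x ∈ G.neighborFinset x \ G.neighborFinset v) :
    ¬(A.biUnion fun x => G.neighborFinset x \ G.neighborFinset v) ⊆ (A.erase a).image f := by
  intro himage
  obtain ⟨x₀, hax₀⟩ := hG.1 a
  obtain ⟨T, hT, hTcard, haT, hx₀T⟩ := hG.exists_isTransversal_deleteEdges hax₀
  have hx₀ : x₀ ∈ A.biUnion (G.neighborFinset ·) :=
    mem_biUnion.2 ⟨a, ha, (mem_neighborFinset ..).2 hax₀⟩
  have hfT : ∀ x ∈ A.erase a, x ∉ T → f x ∈ T := fun x hx hxT =>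
    hT.mem_of_adj ((mem_neighborFinset ..).1 (mem_sdiff.1 (hf x hx)).1) hxT
      (ne_of_mem_erase hx)
      fun h => notMem_of_mem_biUnion_neighborFinset hA hx₀ (h ▸ mem_of_mem_erase hx)
  have hsub : A.biUnion (G.neighborFinset ·) ⊆
      A.biUnion fun x => G.neighborFinset x \ G.neighborFinset v := by
    intro z hz
    obtain ⟨b, hb, hbz⟩ := mem_biUnion.1 hz
    rw [mem_neighborFinset] at hbz
    exact mem_biUnion.2 ⟨b, hb, mem_sdiff.2 ⟨(mem_neighborFinset ..).2 hbz,
      fun hvz => hAv b hb z hbz ((mem_neighborFinset ..).1 hvz)⟩⟩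
  have hcard : #(A.biUnion (G.neighborFinset ·) \ T) ≤ #(A ∩ T) := calc
    _ ≤ #((A.biUnion fun x => G.neighborFinset x \ G.neighborFinset v) \ T) :=
      card_le_card (sdiff_subset_sdiff hsub le_rfl)
    _ ≤ #(A.erase a ∩ T) := card_sdiff_le_card_inter_of_subset_image himage hfT
    _ ≤ #(A ∩ T) := card_le_card (inter_subset_inter_right (erase_subset a A))
  have := hT.tauNum_le_of_card_biUnion_sdiff_le hA hx₀ hcard
  omega

theorem IsTauCritical.card_le_card_biUnion_neighborFinset_sdiff (hG : IsTauCritical G) (v : V)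
    {A : Finset V} (hA : G.IsIndepSet A) (hvA : v ∉ A) (hAv : ∀ a ∈ A, ¬G.Adj v a) :
    #A ≤ #(A.biUnion fun x => G.neighborFinset x \ G.neighborFinset v) := by
  induction A using Finset.strongInduction with
  | H A ih =>
  by_contra! hdef
  have hHall (B : Finset V) (hB : B ⊂ A) :
      #B ≤ #(B.biUnion fun x => G.neighborFinset x \ G.neighborFinset v) :=
    ih B hB (hA.mono (coe_subset.2 hB.subset)) (fun h => hvA (hB.subset h))
      fun a ha => hAv a (hB.subset ha)
  have : Nonempty V := ⟨v⟩
  by_cases hy : ∃ a ∈ A, ∃ y, G.Adj a y ∧ G.Adj v y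
  · obtain ⟨a, ha, y, hay, hvy⟩ := hy
    obtain ⟨f, hf, himage⟩ := exists_image_erase_eq_biUnion_of_card_biUnion_lt ha hHall hdef
    exact hG.not_subset_image_erase_of_adj hA hvA hAv ha hay hvy hf himage.ge
  · push Not at hy
    obtain ⟨a, ha⟩ : A.Nonempty := card_pos.1 (by omega)
    obtain ⟨f, hf, himage⟩ := exists_image_erase_eq_biUnion_of_card_biUnion_lt ha hHall hdef
    exact hG.not_subset_image_erase_of_forall_not_adj hA ha hy hf himage.ge

end Hajnal

/-- Hajnal. For a τ-critical graph `G` with `τ(G) = t` and `|V(G)| = n`,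
every vertex has degree at most `2t + 1 − n`. -/
theorem tau_critical_degree_le (G : SimpleGraph V) [Fintype V] [DecidableRel G.Adj]
    (t n : ℕ) (hcrit : IsTauCritical G) (ht : tauNum G = t) (hn : Fintype.card V = n) :
    ∀ v : V, (G.degree v : ℤ) ≤ 2 * t + 1 - n := by
  classical
  intro v
  obtain ⟨u, hvu⟩ := hcrit.1 v
  obtain ⟨T, hT, hTcard, hvT, huT⟩ := hcrit.exists_isTransversal_deleteEdges hvu
  set S := univ \ insert u (insert v T)
  have hS {p q : V} (hp : p ∈ S) (hpq : G.Adj p q) : q ∈ T := by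
    simp only [S, mem_sdiff, mem_insert, not_or] at hp
    exact hT.mem_of_adj hpq hp.2.2.2 hp.2.2.1 hp.2.1
  have hSind : G.IsIndepSet S := fun p hp q hq _ hpq => (mem_sdiff.1 hq).2
    (mem_insert_of_mem (mem_insert_of_mem (hS hp hpq)))
  have hHajnal := hcrit.card_le_card_biUnion_neighborFinset_sdiff v hSind (by simp [S])
    fun a ha hva => hvT (hS ha hva.symm)
  have hNS : (S.biUnion fun x => G.neighborFinset x \ G.neighborFinset v) ⊆
      T \ G.neighborFinset v :=
    biUnion_subset.2 fun p hp =>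
      sdiff_subset_sdiff (fun q hq => hS hp ((mem_neighborFinset ..).1 hq)) le_rfl
  have hScard : #S + (#T + 2) = n := by
    have hv : #(insert v T) = #T + 1 := card_insert_of_notMem hvT
    have hu : #(insert u (insert v T)) = #T + 2 := by
      rw [card_insert_of_notMem (by simp [huT, hvu.ne']), hv]
    rw [← hu, card_sdiff_add_card_eq_card (subset_univ _), card_univ, hn]
  have hdeg := hT.degree_le_card_inter_neighborFinset_add_one hvT
  have hsplit := card_sdiff_add_card_inter T (G.neighborFinset v)
  have hNScard := card_le_card hNS
  omega
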